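/- Let 𝔾 be a compact quantum group acting on a C*-algebra A, and let π be an irreducible finite dimensional unitary representation of 𝔾, with n = dim H_π. Then the map φ_π : (A □ H_π) ⊗ H_π* → A_π defined by z ⊗ ω ↦ √n · (ι ⊗ ωQ_π^{-1})z is an isomorphism of B-bimodules which is compatible with the B-valued inner products, where H_π* carries the modified inner product ⟪e_i*, e_j*⟫ = ∑_k φ(u_ik u_jk*). -/

import Mathlib

/- ## Preamble: an axiomatized framework for compact quantum groups acting on C*-algebras.

Since Mathlib does not contain minimal tensor products of C*-algebras, compact quantum
groups, Hilbert C*-modules etc., we axiomatize these notions as structures whose fields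
record precisely the defining properties used in the paper
"A construction of finite index C*-algebra inclusions from free actions of compact
quantum groups" by K. De Commer and M. Yamashita. -/

noncomputable section

open scoped ComplexOrder

/-- The closed linear span `[S]` of a subset of a topological `ℂ`-module. -/
def cspan {T : Type*} [AddCommGroup T] [Module ℂ T] [TopologicalSpace T] (S : Set T) : Set T :=
  closure (Submodule.span ℂ S : Set T)

/-- Positivity in a C*-algebra: `x ≥ 0` iff `x = w* w` for some `w`. -/
def IsPos {A : Type*} [NonUnitalNonAssocSemiring A] [StarRing A] (x : A) : Prop :=
  ∃ w, x = star w * w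

/-- Axiomatization of a C*-algebraic tensor product (such as the minimal/spatial one) of
two C*-algebras `A` and `B`: a C*-algebra `T` receiving a bilinear map with the canonical
algebraic properties, the cross-norm property, and densely spanning range. -/
structure CStarTP (A B T : Type*) [NonUnitalCStarAlgebra A] [NonUnitalCStarAlgebra B]
    [NonUnitalCStarAlgebra T] where
  tmul : A →ₗ[ℂ] B →ₗ[ℂ] T
  tmul_mul : ∀ a a' b b', tmul a b * tmul a' b' = tmul (a * a') (b * b')
  tmul_star : ∀ a b, star (tmul a b) = tmul (star a) (star b)
  tmul_norm : ∀ a b, ‖tmul a b‖ = ‖a‖ * ‖b‖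
  dense : cspan {t | ∃ a b, t = tmul a b} = Set.univ

/-- A compact quantum group `𝔾`: a unital C*-algebra `C = C(𝔾)` together with a unital
coassociative comultiplication `Δ : C → C ⊗min C` satisfying the cancellation properties.
The tensor products `CC = C ⊗min C` and `CCC = C ⊗min C ⊗min C` are part of the data,
as are the amplified maps `Δ ⊗ ι` and `ι ⊗ Δ` (extending the algebraic ones). -/
structure CQG where
  C : Type*
  [instC : CStarAlgebra C]
  CC : Type*
  [instCC : CStarAlgebra CC]
  CCC : Type*
  [instCCC : CStarAlgebra CCC]
  τ : CStarTP C C CC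
  τ12 : CStarTP CC C CCC
  τ23 : CStarTP C CC CCC
  τassoc : ∀ a b c, τ12.tmul (τ.tmul a b) c = τ23.tmul a (τ.tmul b c)
  comul : C →⋆ₐ[ℂ] CC
  comulL : CC →⋆ₐ[ℂ] CCC
  comulL_spec : ∀ a b, comulL (τ.tmul a b) = τ12.tmul (comul a) b
  comulR : CC →⋆ₐ[ℂ] CCC
  comulR_spec : ∀ a b, comulR (τ.tmul a b) = τ23.tmul a (comul b)
  coassoc : ∀ x, comulL (comul x) = comulR (comul x)
  cancel_left : cspan {t : CC | ∃ x y, t = comul x * τ.tmul 1 y} = Set.univ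
  cancel_right : cspan {t : CC | ∃ x y, t = comul x * τ.tmul y 1} = Set.univ

attribute [instance] CQG.instC CQG.instCC CQG.instCCC

/-- The Haar state of a compact quantum group: a state `φ` which is left and right
invariant.  The slice maps `φ ⊗ ι` and `ι ⊗ φ` are part of the data. -/
structure Haar (G : CQG) where
  φ : G.C →ₗ[ℂ] ℂ
  unital : φ 1 = 1
  pos : ∀ x, 0 ≤ φ (star x * x)
  sliceL : G.CC →ₗ[ℂ] G.C
  sliceL_spec : ∀ a b, sliceL (G.τ.tmul a b) = φ a • b
  sliceL_cont : Continuous sliceL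
  sliceR : G.CC →ₗ[ℂ] G.C
  sliceR_spec : ∀ a b, sliceR (G.τ.tmul a b) = φ b • a
  sliceR_cont : Continuous sliceR
  inv_left : ∀ x, sliceL (G.comul x) = φ x • 1
  inv_right : ∀ x, sliceR (G.comul x) = φ x • 1

/-- A finite dimensional unitary representation of `G` on the Hilbert space `ℂⁿ`
(with orthonormal basis `(e_i)`), described by its matrix of coefficients
`u = (u_ij)`, where `δ_π(e_i) = ∑_j u_ij ⊗ e_j`.  Unitarity of `u` corresponds to
`δ_π(v)* δ_π(w) = 1 ⊗ ⟨v,w⟩`. -/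
structure QRep (G : CQG) (n : ℕ) where
  u : Matrix (Fin n) (Fin n) G.C
  comul_u : ∀ i j, G.comul (u i j) = ∑ k, G.τ.tmul (u i k) (u k j)
  unitary : ∀ i j, (∑ k, star (u i k) * u j k) = if i = j then (1 : G.C) else 0
  unitary' : ∀ i j, (∑ k, u k i * star (u k j)) = if i = j then (1 : G.C) else 0

/-- `T` intertwines the representations `ρ` and `σ` (as a map `H_ρ → H_σ`,
`T e_i = ∑_j T_{ji} e_j`). -/
def Intertwines {G : CQG} {n m : ℕ} (ρ : QRep G n) (σ : QRep G m)
    (T : Matrix (Fin m) (Fin n) ℂ) : Prop :=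
  ∀ (i : Fin n) (k : Fin m), (∑ j, T j i • σ.u j k) = ∑ j, T k j • ρ.u i j

/-- Irreducibility: every self-intertwiner is scalar. -/
def QRep.IsIrreducible {G : CQG} {n : ℕ} (ρ : QRep G n) : Prop :=
  ∀ T : Matrix (Fin n) (Fin n) ℂ, Intertwines ρ ρ T → ∃ c : ℂ, T = c • (1 : Matrix (Fin n) (Fin n) ℂ)

/-- `ρ` occurs in `π` with nonzero multiplicity. -/
def QRep.OccursIn {G : CQG} {n m : ℕ} (ρ : QRep G n) (π : QRep G m) : Prop :=
  ∃ T : Matrix (Fin m) (Fin n) ℂ, T ≠ 0 ∧ Intertwines ρ π T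

/-- The linear span `P(𝔾)` of all matrix coefficients of finite dimensional unitary
representations of `G`. -/
def coeffSpan (G : CQG) : Submodule ℂ G.C :=
  Submodule.span ℂ {x : G.C | ∃ (n : ℕ) (ρ : QRep G n) (i j : Fin n), x = ρ.u i j}

/-- `χ` is the quantum character `χ_π` of the representation `π`: the element of `P(𝔾)`
such that `(φ(χ ·) ⊗ ι)δ_ρ` is `0` for irreducible `ρ` not occurring in `π` and the
identity for irreducible `ρ` occurring in `π`. -/
def IsQuantumCharacter {G : CQG} (H : Haar G) {m : ℕ} (π : QRep G m) (χ : G.C) : Prop :=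
  χ ∈ coeffSpan G ∧
    ∀ (n : ℕ) (ρ : QRep G n), ρ.IsIrreducible → ∀ i j,
      (ρ.OccursIn π → H.φ (χ * ρ.u i j) = if i = j then 1 else 0) ∧
      (¬ ρ.OccursIn π → H.φ (χ * ρ.u i j) = 0)

/-- Antipode data for `G`: a linear map acting as the antipode on the matrix
coefficients (where it is densely defined), together with its inverse behaviour. -/
structure Antipode (G : CQG) where
  S : G.C →ₗ[ℂ] G.C
  spec : ∀ (n : ℕ) (ρ : QRep G n) (i j : Fin n), S (ρ.u i j) = star (ρ.u j i)
  Sinv : G.C →ₗ[ℂ] G.C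
  sinv_spec : ∀ (n : ℕ) (ρ : QRep G n) (i j : Fin n), Sinv (star (ρ.u j i)) = ρ.u i j

/-- An action (continuous coaction) `α : A → A ⊗min C(𝔾)` of the compact quantum group
`G` on a (possibly non-unital) C*-algebra `A`: an injective nondegenerate
*-homomorphism satisfying the coaction identity `(α ⊗ ι)α = (ι ⊗ Δ)α` and the Podleś
density condition `[α(A)(1 ⊗ C(𝔾))] = A ⊗min C(𝔾)`.  The tensor products
`AC = A ⊗min C(𝔾)`, `ACC = A ⊗min C(𝔾) ⊗min C(𝔾)`, the amplified maps `α ⊗ ι`,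
`ι ⊗ Δ`, multiplication by `1 ⊗ c`, and the slice maps `ι ⊗ φ(h ·)` are part of
the data. -/
structure CQGAction (G : CQG) (H : Haar G) (A : Type*) [NonUnitalCStarAlgebra A] where
  AC : Type*
  [instAC : NonUnitalCStarAlgebra AC]
  ACC : Type*
  [instACC : NonUnitalCStarAlgebra ACC]
  τA : CStarTP A G.C AC
  τ1 : CStarTP AC G.C ACC
  τ2 : CStarTP A G.CC ACC
  τAassoc : ∀ a b c, τ1.tmul (τA.tmul a b) c = τ2.tmul a (G.τ.tmul b c)
  α : A →⋆ₙₐ[ℂ] AC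
  inj : Function.Injective α
  αt : AC →⋆ₙₐ[ℂ] ACC
  αt_spec : ∀ a c, αt (τA.tmul a c) = τ1.tmul (α a) c
  Δt : AC →⋆ₙₐ[ℂ] ACC
  Δt_spec : ∀ a c, Δt (τA.tmul a c) = τ2.tmul a (G.comul c)
  coaction : ∀ a, αt (α a) = Δt (α a)
  nondeg : cspan {t : AC | ∃ a x, t = α a * x} = Set.univ
  /-- right multiplication `x ↦ x · (1 ⊗ c)` by the multiplier `1 ⊗ c` -/
  rmulC : AC →ₗ[ℂ] G.C →ₗ[ℂ] AC
  rmulC_spec : ∀ a c' c, rmulC (τA.tmul a c') c = τA.tmul a (c' * c)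
  rmulC_mul : ∀ x y c, rmulC (x * y) c = x * rmulC y c
  /-- left multiplication `x ↦ (1 ⊗ c) · x` by the multiplier `1 ⊗ c` -/
  lmulC : G.C →ₗ[ℂ] AC →ₗ[ℂ] AC
  lmulC_spec : ∀ c a c', lmulC c (τA.tmul a c') = τA.tmul a (c * c')
  lmulC_mul : ∀ c x y, lmulC c (x * y) = lmulC c x * y
  /-- the Podleś density condition `[α(A)(1 ⊗ C(𝔾))] = A ⊗min C(𝔾)` -/
  podles : cspan {t : AC | ∃ a c, t = rmulC (α a) c} = Set.univ
  /-- slice maps `ι ⊗ φ(h ·) : A ⊗min C(𝔾) → A` -/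
  sliceh : G.C → AC →ₗ[ℂ] A
  sliceh_spec : ∀ h a c, sliceh h (τA.tmul a c) = H.φ (h * c) • a
  sliceh_cont : ∀ h, Continuous (sliceh h)

attribute [instance] CQGAction.instAC CQGAction.instACC

namespace CQGAction

variable {G : CQG} {H : Haar G} {A : Type*} [NonUnitalCStarAlgebra A]

/-- The fixed point algebra `B = A^𝔾 = {x | α(x) = x ⊗ 1}`. -/
def fixed (act : CQGAction G H A) : Set A := {x | act.α x = act.τA.tmul x 1}

/-- The conditional expectation `E_B = (ι ⊗ φ) ∘ α : A → B`. -/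
def EB (act : CQGAction G H A) (x : A) : A := act.sliceh 1 (act.α x)

/-- `E_π`-type maps: `a ↦ (ι ⊗ φ(h ·))(α(a))`; for `h = χ_π` this is the projection
onto the isotypical component `A_π`. -/
def Eslice (act : CQGAction G H A) (h : G.C) (x : A) : A := act.sliceh h (act.α x)

/-- The space `A □ H_π` of equivariant vectors: in coordinates,
`z = ∑_i z_i ⊗ e_i` with `(α ⊗ ι)z = (ι ⊗ δ_π)z`, i.e. `α(z_j) = ∑_i z_i ⊗ u_ij`. -/
def box (act : CQGAction G H A) {n : ℕ} (π : QRep G n) : Set (Fin n → A) :=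
  {v | ∀ j, act.α (v j) = ∑ i, act.τA.tmul (v i) (π.u i j)}

/-- The isotypical component `A_π ⊆ A`: the span of the coordinates `(ι ⊗ ω)z` of
elements `z ∈ A □ H_π`, `ω ∈ H_π*`. -/
def isotyp (act : CQGAction G H A) {n : ℕ} (π : QRep G n) : Submodule ℂ A :=
  Submodule.span ℂ {x | ∃ v ∈ act.box π, ∃ j, x = v j}

/-- The Ellwood (freeness) condition : `[α(A)(A ⊗ 1)] = A ⊗min C(𝔾)`. -/
def IsFree (act : CQGAction G H A) : Prop :=
  cspan {t : act.AC | ∃ a a', t = act.α a * act.τA.tmul a' 1} = Set.univ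

end CQGAction

/-- The `π`-th spectral subspace `C(𝔾)_π` of `C(𝔾)` for the regular coaction `Δ`:
coordinates of elements of `C(𝔾) □ H_π`. -/
def regBox (G : CQG) {n : ℕ} (π : QRep G n) : Set (Fin n → G.C) :=
  {v | ∀ j, G.comul (v j) = ∑ i, G.τ.tmul (v i) (π.u i j)}

/-- The isotypical component `C(𝔾)_π` of `C(𝔾)` (the span of matrix coefficients
of `π`). -/
def regIsotyp (G : CQG) {n : ℕ} (π : QRep G n) : Submodule ℂ G.C :=
  Submodule.span ℂ {x | ∃ v ∈ regBox G π, ∃ j, x = v j}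
open scoped TensorProduct

/-- `A □ H_π` as a `ℂ`-submodule of `A^n`. -/
def boxSub {G : CQG} {H : Haar G} {A : Type*} [NonUnitalCStarAlgebra A]
    (act : CQGAction G H A) {n : ℕ} (π : QRep G n) : Submodule ℂ (Fin n → A) where
  carrier := act.box π
  zero_mem' := by
    intro j
    show act.α ((0 : Fin n → A) j) = _
    rw [Pi.zero_apply, map_zero act.α]
    simp
  add_mem' := by
    intro v w hv hw j
    simp only [Pi.add_apply, map_add, hv j, hw j, ← Finset.sum_add_distrib,
      LinearMap.add_apply]
  smul_mem' := by
    intro c v hv j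
    show act.α ((c • v) j) = _
    rw [Pi.smul_apply, map_smul act.α, hv j, Finset.smul_sum]
    refine Finset.sum_congr rfl fun i _ => ?_
    rw [Pi.smul_apply, map_smul, LinearMap.smul_apply]


/-! Write `z ∈ A □ H_π` in coordinates, `α(z_k) = ∑_i z_i ⊗ u_ik`. The orthogonality relations
`φ(u_ij^* u_kl) = δ_ik Q_lj / Tr Q` give two formulas: the slice `(ι ⊗ φ(u_ij^* ·))α` maps `z_k`
to `(Q_kj / Tr Q) z_i`, and `E_B(z_b^* z'_d) = (Q_db / Tr Q) ⟨z, z'⟩_B`. Identifying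
`(A □ H_π) ⊗ ℂⁿ` with `(A □ H_π)ⁿ`, the map `φ_π` becomes `f ↦ √n ∑_{j,k} (Q⁻¹)_jk (f_j)_k`.
In the first formula the factor `Q` cancels `Q⁻¹`, so the slices of `φ_π(f)` are the coordinates
of the `f_j` up to the scalar `√n / Tr Q`: this is injectivity, and `z_j = φ_π(z ⊗ (e_j^* Q) / √n)`
gives surjectivity onto `A_π`. In the second formula the same cancellation leaves
`n ⟨Q⁻¹ ω̄, ω'⟩ / Tr Q`, which is `⟪ω, ω'⟫` by the relation for `φ(u_ij u_kl^*)` and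
`Tr Q = Tr Q⁻¹`. -/

def QRep.HaarOrthogonal {G : CQG} (H : Haar G) {n : ℕ} (π : QRep G n)
    (Q : Matrix (Fin n) (Fin n) ℂ) : Prop :=
  ∀ i j k l, H.φ (star (π.u i j) * π.u k l) = (if i = k then (1:ℂ) else 0) * Q l j / Q.trace

namespace CQGAction

open Matrix

variable {G : CQG} {H : Haar G} {A : Type*} [NonUnitalCStarAlgebra A] (act : CQGAction G H A)
  {n : ℕ} {π : QRep G n} {Q : Matrix (Fin n) (Fin n) ℂ}

theorem EB_smul (c : ℂ) (x : A) : act.EB (c • x) = c • act.EB x := by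
  simp [EB]

theorem EB_sum {ι : Type*} (s : Finset ι) (x : ι → A) :
    act.EB (∑ i ∈ s, x i) = ∑ i ∈ s, act.EB (x i) := by
  simp [EB]

theorem EB_star_mul_of_mem_box (hQ : π.HaarOrthogonal H Q) {v v' : Fin n → A}
    (hv : v ∈ act.box π) (hv' : v' ∈ act.box π) (b d : Fin n) :
    act.EB (star (v b) * v' d) = (Q d b / Q.trace) • ∑ i, star (v i) * v' i := by
  rw [EB, map_mul, map_star, hv b, hv' d, star_sum, Finset.sum_mul_sum, map_sum, Finset.smul_sum]
  refine Finset.sum_congr rfl fun i _ => ?_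
  simp [act.τA.tmul_star, act.τA.tmul_mul, act.sliceh_spec, hQ _ b _ d, ite_div, ite_smul]

theorem EB_star_sum_smul_mul_sum_smul (hQ : π.HaarOrthogonal H Q) {v v' : Fin n → A}
    (hv : v ∈ act.box π) (hv' : v' ∈ act.box π) (a a' : Fin n → ℂ) :
    act.EB (star (∑ k, a k • v k) * ∑ k, a' k • v' k) =
      (star a ⬝ᵥ (a' ᵥ* Q) / Q.trace) • ∑ i, star (v i) * v' i := by
  simp only [star_sum, star_smul, Finset.sum_mul_sum, smul_mul_smul_comm, EB_sum, EB_smul,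
    EB_star_mul_of_mem_box act hQ hv hv', smul_smul, ← Finset.sum_smul]
  congr 1
  simp only [dotProduct, vecMul, Finset.mul_sum, Finset.sum_div, Pi.star_apply]
  refine Finset.sum_congr rfl fun b _ => Finset.sum_congr rfl fun d _ => ?_
  ring

variable (π) in
def coeffSlice (i k : Fin n) : A →ₗ[ℂ] A :=
  act.sliceh (star (π.u i k)) ∘ₗ (act.α : A →ₗ[ℂ] act.AC)

theorem coeffSlice_apply_of_mem_box (hQ : π.HaarOrthogonal H Q) {v : Fin n → A}
    (hv : v ∈ act.box π) (i j k : Fin n) :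
    act.coeffSlice π i j (v k) = (Q k j / Q.trace) • v i := by
  simp [coeffSlice, hv k, act.sliceh_spec, hQ _ _ _ k, ite_div, ite_smul]

variable (π) in
def boxContract (M : Matrix (Fin n) (Fin n) ℂ) : (Fin n → boxSub act π) →ₗ[ℂ] A where
  toFun f := ∑ j, ∑ k, M j k • (f j : Fin n → A) k
  map_add' f g := by simp [smul_add, Finset.sum_add_distrib]
  map_smul' c f := by simp [Finset.smul_sum, smul_comm c]

theorem boxContract_apply (M : Matrix (Fin n) (Fin n) ℂ) (f : Fin n → boxSub act π) :
    act.boxContract π M f = ∑ j, ∑ k, M j k • (f j : Fin n → A) k :=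
  rfl

theorem boxContract_const_smul (M : Matrix (Fin n) (Fin n) ℂ) (c : Fin n → ℂ)
    (v : boxSub act π) :
    act.boxContract π M (fun j => c j • v) = ∑ k, (c ᵥ* M) k • (v : Fin n → A) k := by
  simp only [boxContract_apply, SetLike.val_smul, Pi.smul_apply, smul_smul, vecMul, dotProduct,
    Finset.sum_smul]
  rw [Finset.sum_comm]
  simp only [mul_comm]

theorem coeffSlice_boxContract (hQ : π.HaarOrthogonal H Q) (M : Matrix (Fin n) (Fin n) ℂ)
    (f : Fin n → boxSub act π) (i k : Fin n) :
    act.coeffSlice π i k (act.boxContract π M f) =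
      (Q.trace)⁻¹ • ∑ j, (M * Q) j k • (f j : Fin n → A) i := by
  simp only [boxContract_apply, map_sum, map_smul, act.coeffSlice_apply_of_mem_box hQ (f _).2,
    smul_smul, ← Finset.sum_smul, Finset.smul_sum, mul_apply]
  refine Finset.sum_congr rfl fun j _ => ?_
  rw [Finset.mul_sum]
  congr 1
  refine Finset.sum_congr rfl fun l _ => ?_
  ring

theorem boxContract_inv_injective (hQ : π.HaarOrthogonal H Q) (hQpos : Q.PosDef) :
    Function.Injective (act.boxContract π Q⁻¹) := by
  refine (injective_iff_map_eq_zero _).2 fun f hf =>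
    funext fun j => Subtype.ext <| funext fun i => ?_
  have : Nonempty (Fin n) := ⟨j⟩
  have h := congrArg (act.coeffSlice π i j) hf
  rw [coeffSlice_boxContract act hQ, nonsing_inv_mul _ ((isUnit_iff_isUnit_det Q).1 hQpos.isUnit),
    map_zero] at h
  simpa [one_apply, ite_smul, hQpos.trace_pos.ne'] using h

theorem range_boxContract {M : Matrix (Fin n) (Fin n) ℂ} (hM : IsUnit M) :
    LinearMap.range (act.boxContract π M) = act.isotyp π := by
  apply le_antisymm
  · rintro _ ⟨f, rfl⟩
    rw [boxContract_apply]
    refine Submodule.sum_mem _ fun j _ => Submodule.sum_mem _ fun k _ =>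
      Submodule.smul_mem _ _ ?_
    exact Submodule.subset_span ⟨f j, (f j).2, k, rfl⟩
  · rw [isotyp, Submodule.span_le]
    rintro _ ⟨v, hv, j, rfl⟩
    let z : boxSub act π := ⟨v, hv⟩
    refine ⟨fun j' => (Pi.single j 1 ᵥ* M⁻¹) j' • z, ?_⟩
    rw [boxContract_const_smul, vecMul_vecMul, nonsing_inv_mul _ ((isUnit_iff_isUnit_det M).1 hM),
      vecMul_one]
    simp [z, Pi.single_apply]

variable (π Q) in
def boxTensorDualMap : boxSub act π ⊗[ℂ] (Fin n → ℂ) →ₗ[ℂ] A :=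
  (Real.sqrt n : ℂ) •
    (act.boxContract π Q⁻¹ ∘ₗ (TensorProduct.piScalarRight ℂ ℂ (boxSub act π) (Fin n)).toLinearMap)

theorem boxTensorDualMap_tmul (v : boxSub act π) (w : Fin n → ℂ) :
    act.boxTensorDualMap π Q (v ⊗ₜ w) =
      (Real.sqrt n : ℂ) • act.boxContract π Q⁻¹ (fun j => w j • v) := by
  simp [boxTensorDualMap, TensorProduct.piScalarRight_apply, TensorProduct.piScalarRightHom_tmul]

theorem boxTensorDualMap_tmul_eq_sum_vecMul (v : boxSub act π) (w : Fin n → ℂ) :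
    act.boxTensorDualMap π Q (v ⊗ₜ w) =
      (Real.sqrt n : ℂ) • ∑ k, (w ᵥ* Q⁻¹) k • (v : Fin n → A) k := by
  rw [boxTensorDualMap_tmul, boxContract_const_smul]

theorem boxTensorDualMap_injective (hQ : π.HaarOrthogonal H Q) (hQpos : Q.PosDef) :
    Function.Injective (act.boxTensorDualMap π Q) := by
  refine (injective_iff_map_eq_zero _).2 fun t ht =>
    (TensorProduct.piScalarRight ℂ ℂ (boxSub act π) (Fin n)).injective ?_
  ext j : 1
  have hn : (Real.sqrt n : ℂ) ≠ 0 :=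
    Complex.ofReal_ne_zero.2 (Real.sqrt_ne_zero'.2 (Nat.cast_pos.2 j.pos))
  rw [boxTensorDualMap, LinearMap.smul_apply, smul_eq_zero, or_iff_right hn,
    LinearMap.comp_apply] at ht
  rw [map_zero]
  exact congrFun (act.boxContract_inv_injective hQ hQpos (ht.trans (map_zero _).symm)) j

theorem range_boxTensorDualMap (hQ : IsUnit Q) :
    LinearMap.range (act.boxTensorDualMap π Q) = act.isotyp π := by
  rw [← act.range_boxContract (isUnit_nonsing_inv_iff.2 hQ)]
  rcases Nat.eq_zero_or_pos n with rfl | hn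
  · have : act.boxContract π Q⁻¹ = 0 := Subsingleton.elim _ _
    rw [this, boxTensorDualMap]
    simp
  · rw [boxTensorDualMap,
      LinearMap.range_smul _ _ (Complex.ofReal_ne_zero.2 (Real.sqrt_ne_zero'.2 (Nat.cast_pos.2 hn))),
      LinearMap.range_comp_of_range_eq_top _ (LinearEquiv.range _)]

theorem EB_star_boxTensorDualMap_mul (hQ : π.HaarOrthogonal H Q) (hQpos : Q.PosDef)
    (v v' : boxSub act π) (w w' : Fin n → ℂ) :
    act.EB (star (act.boxTensorDualMap π Q (v ⊗ₜ w)) * act.boxTensorDualMap π Q (v' ⊗ₜ w')) =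
      (n * ((Q⁻¹ *ᵥ star w) ⬝ᵥ w') / Q.trace) •
        ∑ k, star ((v : Fin n → A) k) * (v' : Fin n → A) k := by
  rw [boxTensorDualMap_tmul_eq_sum_vecMul, boxTensorDualMap_tmul_eq_sum_vecMul, star_smul,
    smul_mul_smul_comm, EB_smul, EB_star_sum_smul_mul_sum_smul act hQ v.2 v'.2, smul_smul,
    vecMul_vecMul, nonsing_inv_mul _ ((isUnit_iff_isUnit_det Q).1 hQpos.isUnit), vecMul_one,
    star_vecMul, hQpos.isHermitian.inv.eq, Complex.star_def, Complex.conj_ofReal,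
    ← Complex.ofReal_mul, Real.mul_self_sqrt n.cast_nonneg, Complex.ofReal_natCast, mul_div_assoc]

end CQGAction

theorem box_tensor_dual_iso_isotyp_general
    (G : CQG) (H : Haar G) {A : Type*} [NonUnitalCStarAlgebra A]
    (act : CQGAction G H A) {n : ℕ} (π : QRep G n)
    (Q : Matrix (Fin n) (Fin n) ℂ) (hQpos : Q.PosDef)
    (hQtr : Q.trace = Q⁻¹.trace)
    (hQ1 : ∀ i j k l, H.φ (star (π.u i j) * π.u k l) =
      (if i = k then (1:ℂ) else 0) * Q l j / Q.trace)
    (hQ2 : ∀ i j k l, H.φ (π.u i j * star (π.u k l)) =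
      (if j = l then (1:ℂ) else 0) * Q⁻¹ k i / Q⁻¹.trace) :
    ∃ Φ : (boxSub act π ⊗[ℂ] (Fin n → ℂ)) →ₗ[ℂ] A,
      -- `Φ` is the map `z ⊗ ω ↦ √n (ι ⊗ ω Q_π^{-1}) z`
      (∀ (v : boxSub act π) (w : Fin n → ℂ),
        Φ (v ⊗ₜ w) = (Real.sqrt n : ℂ) • ∑ j, ∑ k, (w j * Q⁻¹ j k) • (v : Fin n → A) k) ∧
      -- it is a linear isomorphism onto `A_π`
      Function.Injective Φ ∧ LinearMap.range Φ = act.isotyp π ∧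
      -- it is a `B`-bimodule map: `φ_π(b·(z ⊗ ω)) = b φ_π(z ⊗ ω)` and
      -- `φ_π((z ⊗ ω)·b) = φ_π(z ⊗ ω) b` for `b ∈ B`
      (∀ b ∈ act.fixed, ∀ (v v' : boxSub act π) (w : Fin n → ℂ),
        (∀ i, (v' : Fin n → A) i = b * (v : Fin n → A) i) →
          Φ (v' ⊗ₜ w) = b * Φ (v ⊗ₜ w)) ∧
      (∀ b ∈ act.fixed, ∀ (v v' : boxSub act π) (w : Fin n → ℂ),
        (∀ i, (v' : Fin n → A) i = (v : Fin n → A) i * b) →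
          Φ (v' ⊗ₜ w) = Φ (v ⊗ₜ w) * b) ∧
      -- it is compatible with the `B`-valued inner products:
      -- `⟨φ_π(z ⊗ ω), φ_π(z' ⊗ ω')⟩_B = ⟪ω, ω'⟫ ⟨z, z'⟩_B`
      (∀ (v v' : boxSub act π) (w w' : Fin n → ℂ),
        act.EB (star (Φ (v ⊗ₜ w)) * Φ (v' ⊗ₜ w')) =
          (∑ i, ∑ j, (starRingEnd ℂ) (w i) * w' j *
              (∑ k, H.φ (π.u i k * star (π.u j k)))) •
            ∑ k, star ((v : Fin n → A) k) * (v' : Fin n → A) k) := by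
  have hφ : ∀ i j, ∑ k, H.φ (π.u i k * star (π.u j k)) = n * Q⁻¹ j i / Q.trace := by
    simp [hQ2, hQtr, mul_div_assoc]
  refine ⟨act.boxTensorDualMap π Q, fun v w => ?_, act.boxTensorDualMap_injective hQ1 hQpos,
    act.range_boxTensorDualMap hQpos.isUnit, fun b _ v v' w hv' => ?_, fun b _ v v' w hv' => ?_,
    fun v v' w w' => ?_⟩
  · simp only [act.boxTensorDualMap_tmul, act.boxContract_apply, SetLike.val_smul, Pi.smul_apply,
      smul_smul, mul_comm]
  · simp only [act.boxTensorDualMap_tmul_eq_sum_vecMul, hv', Finset.mul_sum, mul_smul_comm]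
  · simp only [act.boxTensorDualMap_tmul_eq_sum_vecMul, hv', Finset.sum_mul, smul_mul_assoc]
  · rw [act.EB_star_boxTensorDualMap_mul hQ1 hQpos]
    congr 1
    simp only [hφ, dotProduct, Matrix.mulVec, Pi.star_apply, Finset.sum_mul, Finset.mul_sum,
      Finset.sum_div]
    rw [Finset.sum_comm]
    refine Finset.sum_congr rfl fun i _ => Finset.sum_congr rfl fun j _ => ?_
    simp only [RCLike.star_def]
    ring

/-- Lemma 2.2: for an action of `𝔾` on `A` and an irreducible `π` with
`n = dim H_π` and Woronowicz matrix `Q = Q_π`, the map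
`φ_π : (A □ H_π) ⊗ H_π* → A_π`, `z ⊗ ω ↦ √n (ι ⊗ ω Q_π^{-1}) z`, is an isomorphism
of `B`-bimodules compatible with the `B`-valued inner products, where `H_π*` carries
the modified inner product `⟪e_i*, e_j*⟫ = ∑_k φ(u_ik u_jk*)`.
Here `H_π* ≅ ℂⁿ` via the dual basis `(e_i*)`. -/
theorem box_tensor_dual_iso_isotyp
    (G : CQG) (H : Haar G) {A : Type*} [NonUnitalCStarAlgebra A]
    (act : CQGAction G H A) {n : ℕ} (π : QRep G n) (hirr : π.IsIrreducible)
    (Q : Matrix (Fin n) (Fin n) ℂ) (hQpos : Q.PosDef) (hQinv : IsUnit Q)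
    (hQtr : Q.trace = Q⁻¹.trace)
    (hQ1 : ∀ i j k l, H.φ (star (π.u i j) * π.u k l) =
      (if i = k then (1:ℂ) else 0) * Q l j / Q.trace)
    (hQ2 : ∀ i j k l, H.φ (π.u i j * star (π.u k l)) =
      (if j = l then (1:ℂ) else 0) * Q⁻¹ k i / Q⁻¹.trace) :
    ∃ Φ : (boxSub act π ⊗[ℂ] (Fin n → ℂ)) →ₗ[ℂ] A,
      -- `Φ` is the map `z ⊗ ω ↦ √n (ι ⊗ ω Q_π^{-1}) z`
      (∀ (v : boxSub act π) (w : Fin n → ℂ),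
        Φ (v ⊗ₜ w) = (Real.sqrt n : ℂ) • ∑ j, ∑ k, (w j * Q⁻¹ j k) • (v : Fin n → A) k) ∧
      -- it is a linear isomorphism onto `A_π`
      Function.Injective Φ ∧ LinearMap.range Φ = act.isotyp π ∧
      -- it is a `B`-bimodule map: `φ_π(b·(z ⊗ ω)) = b φ_π(z ⊗ ω)` and
      -- `φ_π((z ⊗ ω)·b) = φ_π(z ⊗ ω) b` for `b ∈ B`
      (∀ b ∈ act.fixed, ∀ (v v' : boxSub act π) (w : Fin n → ℂ),
        (∀ i, (v' : Fin n → A) i = b * (v : Fin n → A) i) →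
          Φ (v' ⊗ₜ w) = b * Φ (v ⊗ₜ w)) ∧
      (∀ b ∈ act.fixed, ∀ (v v' : boxSub act π) (w : Fin n → ℂ),
        (∀ i, (v' : Fin n → A) i = (v : Fin n → A) i * b) →
          Φ (v' ⊗ₜ w) = Φ (v ⊗ₜ w) * b) ∧
      -- it is compatible with the `B`-valued inner products:
      -- `⟨φ_π(z ⊗ ω), φ_π(z' ⊗ ω')⟩_B = ⟪ω, ω'⟫ ⟨z, z'⟩_B`
      (∀ (v v' : boxSub act π) (w w' : Fin n → ℂ),
        act.EB (star (Φ (v ⊗ₜ w)) * Φ (v' ⊗ₜ w')) =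
          (∑ i, ∑ j, (starRingEnd ℂ) (w i) * w' j *
              (∑ k, H.φ (π.u i k * star (π.u j k)))) •
            ∑ k, star ((v : Fin n → A) k) * (v' : Fin n → A) k) :=
  box_tensor_dual_iso_isotyp_general G H act π Q hQpos hQtr hQ1 hQ2
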